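/- arXiv:1407.1755 — 4 statements merged into one kernel-verified Lean document; each statement's English description precedes it below -/
import Mathlib

section
/- For two smooth, strictly convex functions f_1, f_2 : ℝⁿ → ℝ, each attaining a minimum at points p_1 and p_2 respectively, a point x is a Pareto optimum of the minimization problem (f_1, f_2) if and only if x minimizes the weighted sum t·f_1 + (1−t)·f_2 for some t ∈ [0,1]. -/
/-- Pareto optimality (minimization) for a pair of objectives on `ℝⁿ`. -/
def ParetoMin2 {n : ℕ} (f₁ f₂ : (Fin n → ℝ) → ℝ) (x : Fin n → ℝ) : Prop :=
  ¬∃ y : Fin n → ℝ, (f₁ y ≤ f₁ x ∧ f₂ y ≤ f₂ x) ∧ (f₁ y < f₁ x ∨ f₂ y < f₂ x)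

/-- unique minimizer of a strictly convex function -/
lemma strict_uniq {n : ℕ} {g : (Fin n → ℝ) → ℝ} (hg : StrictConvexOn ℝ Set.univ g)
    {x y : Fin n → ℝ} (hx : ∀ z, g x ≤ g z) (hy : g y ≤ g x) : y = x := by
  by_contra hne
  have h := hg.2 (Set.mem_univ y) (Set.mem_univ x) hne
    (by norm_num : (0:ℝ) < 1/2) (by norm_num : (0:ℝ) < 1/2) (by norm_num)
  have h2 := hx ((1/2 : ℝ) • y + (1/2 : ℝ) • x)
  simp only [smul_eq_mul] at h
  linarith

lemma lim_aux (A c u : ℝ) (h : ∀ ε > (0:ℝ), A - ε * c < u) : A ≤ u := by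
  refine le_of_forall_sub_le fun ε hε => ?_
  have hc1 : (0:ℝ) < |c| + 1 := by positivity
  have h1 := h (ε / (|c| + 1)) (by positivity)
  have h2 : ε / (|c| + 1) * c ≤ ε := by
    rw [div_mul_eq_mul_div, div_le_iff₀ hc1]
    nlinarith [le_abs_self c, hε.le, abs_nonneg c]
  linarith

theorem stmt_4 {n : ℕ} (f₁ f₂ : (Fin n → ℝ) → ℝ)
    (hs₁ : ContDiff ℝ (⊤ : ℕ∞) f₁) (hs₂ : ContDiff ℝ (⊤ : ℕ∞) f₂)
    (hc₁ : StrictConvexOn ℝ Set.univ f₁) (hc₂ : StrictConvexOn ℝ Set.univ f₂)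
    (p₁ p₂ : Fin n → ℝ) (hp₁ : ∀ y, f₁ p₁ ≤ f₁ y) (hp₂ : ∀ y, f₂ p₂ ≤ f₂ y)
    (x : Fin n → ℝ) :
    ParetoMin2 f₁ f₂ x ↔
      ∃ t ∈ Set.Icc (0 : ℝ) 1,
        ∀ y, t * f₁ x + (1 - t) * f₂ x ≤ t * f₁ y + (1 - t) * f₂ y := by
  constructor
  · intro hp
    -- scalarization via hyperplane separation
    set D : Set (ℝ × ℝ) := {p | ∃ y, f₁ y ≤ p.1 ∧ f₂ y ≤ p.2} with hD_def
    set O : Set (ℝ × ℝ) := Set.Iio (f₁ x) ×ˢ Set.Iio (f₂ x) with hO_def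
    have hOconv : Convex ℝ O := (convex_Iio _).prod (convex_Iio _)
    have hOopen : IsOpen O := isOpen_Iio.prod isOpen_Iio
    have hDconv : Convex ℝ D := by
      rintro p ⟨y, hy1, hy2⟩ q ⟨z, hz1, hz2⟩ a b ha hb hab
      refine ⟨a • y + b • z, ?_, ?_⟩
      · have h := hc₁.convexOn.2 (Set.mem_univ y) (Set.mem_univ z) ha hb hab
        simp only [smul_eq_mul] at h
        have : a * f₁ y + b * f₁ z ≤ a * p.1 + b * q.1 := by
          have h1 := mul_le_mul_of_nonneg_left hy1 ha
          have h2 := mul_le_mul_of_nonneg_left hz1 hb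
          linarith
        simpa using le_trans h this
      · have h := hc₂.convexOn.2 (Set.mem_univ y) (Set.mem_univ z) ha hb hab
        simp only [smul_eq_mul] at h
        have : a * f₂ y + b * f₂ z ≤ a * p.2 + b * q.2 := by
          have h1 := mul_le_mul_of_nonneg_left hy2 ha
          have h2 := mul_le_mul_of_nonneg_left hz2 hb
          linarith
        simpa using le_trans h this
    have hdisj : Disjoint O D := by
      rw [Set.disjoint_left]
      rintro p hpO ⟨y, hy1, hy2⟩
      rw [hO_def, Set.mem_prod, Set.mem_Iio, Set.mem_Iio] at hpO
      exact hp ⟨y, ⟨le_of_lt (lt_of_le_of_lt hy1 hpO.1),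
        le_of_lt (lt_of_le_of_lt hy2 hpO.2)⟩, Or.inl (lt_of_le_of_lt hy1 hpO.1)⟩
    obtain ⟨f, u, hO, hD⟩ := geometric_hahn_banach_open hOconv hOopen hDconv hdisj
    set t₁ := f (1, 0) with ht₁def
    set t₂ := f (0, 1) with ht₂def
    have hf : ∀ a b : ℝ, f (a, b) = a * t₁ + b * t₂ := by
      intro a b
      have h : (a, b) = a • ((1:ℝ), (0:ℝ)) + b • ((0:ℝ), (1:ℝ)) := by
        simp [Prod.ext_iff]
      rw [h, map_add, map_smul, map_smul, smul_eq_mul, smul_eq_mul]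
    have hmemO : ∀ ε > (0:ℝ), ∀ δ > (0:ℝ), (f₁ x - ε, f₂ x - δ) ∈ O := by
      intro ε hε δ hδ
      rw [hO_def, Set.mem_prod, Set.mem_Iio, Set.mem_Iio]
      constructor <;> [skip; skip] <;> simp <;> linarith
    have hDy : ∀ y, u ≤ t₁ * f₁ y + t₂ * f₂ y := by
      intro y
      have h := hD (f₁ y, f₂ y) ⟨y, le_refl _, le_refl _⟩
      rw [hf] at h
      linarith
    -- A ≤ u
    have hA : t₁ * f₁ x + t₂ * f₂ x ≤ u := by
      apply lim_aux _ (t₁ + t₂)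
      intro ε hε
      have h := hO _ (hmemO ε hε ε hε)
      rw [hf] at h
      linarith [h]
    -- nonnegativity of t₁
    have hnn : (0:ℝ) ≤ t₁ := by
      by_contra hlt
      push_neg at hlt
      set s := (u - (t₁ * f₁ x + t₂ * f₂ x) + 1) / (-t₁) with hs
      have hspos : 0 < s := by
        apply div_pos (by linarith) (by linarith)
      set δ := 1 / (|t₂| + 1) with hδ
      have hδpos : 0 < δ := by positivity
      have h := hO _ (hmemO s hspos δ hδpos)
      rw [hf] at h
      have hst : s * (-t₁) = u - (t₁ * f₁ x + t₂ * f₂ x) + 1 := by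
        rw [hs, div_mul_cancel₀]; linarith
      have hδt : δ * t₂ ≤ 1 := by
        rw [hδ, div_mul_eq_mul_div, div_le_iff₀ (by positivity : (0:ℝ) < |t₂| + 1)]
        nlinarith [le_abs_self t₂, abs_nonneg t₂]
      nlinarith
    have hnn2 : (0:ℝ) ≤ t₂ := by
      by_contra hlt
      push_neg at hlt
      set s := (u - (t₁ * f₁ x + t₂ * f₂ x) + 1) / (-t₂) with hs
      have hspos : 0 < s := by
        apply div_pos (by linarith) (by linarith)
      set δ := 1 / (|t₁| + 1) with hδ
      have hδpos : 0 < δ := by positivity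
      have h := hO _ (hmemO δ hδpos s hspos)
      rw [hf] at h
      have hst : s * (-t₂) = u - (t₁ * f₁ x + t₂ * f₂ x) + 1 := by
        rw [hs, div_mul_cancel₀]; linarith
      have hδt : δ * t₁ ≤ 1 := by
        rw [hδ, div_mul_eq_mul_div, div_le_iff₀ (by positivity : (0:ℝ) < |t₁| + 1)]
        nlinarith [le_abs_self t₁, abs_nonneg t₁]
      nlinarith
    have hsum : 0 < t₁ + t₂ := by
      have h := hO _ (hmemO 1 one_pos 1 one_pos)
      rw [hf] at h
      have h2 := hDy x
      linarith
    refine ⟨t₁ / (t₁ + t₂), ⟨div_nonneg hnn hsum.le, (div_le_one hsum).mpr (by linarith)⟩,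
      fun y => ?_⟩
    have hy := hDy y
    have key : t₁ * f₁ x + t₂ * f₂ x ≤ t₁ * f₁ y + t₂ * f₂ y := le_trans hA hy
    have h1t : (1:ℝ) - t₁ / (t₁ + t₂) = t₂ / (t₁ + t₂) := by
      field_simp
      ring
    rw [h1t]
    have e1 : ∀ a b : ℝ, t₁/(t₁+t₂)*a + t₂/(t₁+t₂)*b = (t₁*a+t₂*b)/(t₁+t₂) := fun a b => by
      ring
    rw [e1, e1]
    exact (div_le_div_iff_of_pos_right hsum).mpr key
  · rintro ⟨t, ⟨ht0, ht1⟩, hmin⟩ ⟨y, ⟨h1, h2⟩, hlt⟩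
    rcases eq_or_lt_of_le ht0 with h0 | h0
    · subst h0
      have hminx : ∀ z, f₂ x ≤ f₂ z := fun z => by have := hmin z; linarith
      have hyx : y = x := strict_uniq hc₂ hminx h2
      subst hyx
      rcases hlt with h | h <;> exact lt_irrefl _ h
    · rcases eq_or_lt_of_le ht1 with h1' | h1'
      · subst h1'
        have hminx : ∀ z, f₁ x ≤ f₁ z := fun z => by have := hmin z; linarith
        have hyx : y = x := strict_uniq hc₁ hminx h1
        subst hyx
        rcases hlt with h | h <;> exact lt_irrefl _ h
      · have hm := hmin y
        rcases hlt with h | h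
        · nlinarith [mul_lt_mul_of_pos_left h h0,
            mul_le_mul_of_nonneg_left h2 (by linarith : (0:ℝ) ≤ 1 - t)]
        · nlinarith [mul_lt_mul_of_pos_left h (by linarith : (0:ℝ) < 1 - t),
            mul_le_mul_of_nonneg_left h1 ht0]
end

section
/- For the spherically symmetric case f_i(x) = |x − v_i|² with v_1,…,v_m ∈ ℝⁿ, the set of Pareto optima of the minimization problem (f_1,…,f_m) equals the convex hull of {v_1,…,v_m}. -/
/-!
If `x` lies outside the convex hull `K` of the archetypes, its nearest point `p` in `K` is
strictly closer than `x` to every point of `K` (the angle at `p` between `x` and any point of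
`K` is obtuse), so `p` dominates `x`. Conversely, if `x = ∑ wᵢ vᵢ` is a convex combination
and `y` is any point, then `∑ wᵢ (‖y - vᵢ‖² - ‖x - vᵢ‖²) = ‖y - x‖²`, so `y` cannot be
at least as close as `x` to every `vᵢ` unless `y = x`.
-/

open RealInnerProductSpace

/-- Pareto optimality (minimization) for a family of objectives. -/
def ParetoMin {m : ℕ} {E : Type*} (f : Fin m → E → ℝ) (x : E) : Prop :=
  ¬∃ y : E, (∀ i, f i y ≤ f i x) ∧ ∃ j, f j y < f j x

variable {E : Type*} [NormedAddCommGroup E] [InnerProductSpace ℝ E]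

theorem exists_forall_norm_sub_lt_of_notMem {K : Set E} (hK : Convex ℝ K) (hKc : IsComplete K)
    (hKne : K.Nonempty) {x : E} (hx : x ∉ K) : ∃ p ∈ K, ∀ y ∈ K, ‖p - y‖ < ‖x - y‖ := by
  obtain ⟨p, hpK, hpmin⟩ := exists_norm_eq_iInf_of_complete_convex hKne hKc hK x
  have hobtuse := (norm_eq_iInf_iff_real_inner_le_zero hK hpK).1 hpmin
  have hxp : 0 < ‖x - p‖ := norm_pos_iff.2 (sub_ne_zero.2 fun h => hx (h ▸ hpK))
  refine ⟨p, hpK, fun y hy => lt_of_pow_lt_pow_left₀ 2 (norm_nonneg _) ?_⟩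
  have hsplit : ‖x - y‖ ^ 2 = ‖x - p‖ ^ 2 - 2 * ⟪x - p, y - p⟫ + ‖y - p‖ ^ 2 := by
    rw [← norm_sub_sq_real, sub_sub_sub_cancel_right]
  rw [norm_sub_rev p y, hsplit]
  nlinarith [hobtuse y hy]

theorem sum_mul_norm_sub_sq_sub_norm_sub_sq {ι : Type*} [Fintype ι] {w : ι → ℝ} {z : ι → E}
    (hw : ∑ i, w i = 1) {x : E} (hx : ∑ i, w i • z i = x) (y : E) :
    ∑ i, w i * (‖y - z i‖ ^ 2 - ‖x - z i‖ ^ 2) = ‖y - x‖ ^ 2 := by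
  have hterm : ∀ i, w i * (‖y - z i‖ ^ 2 - ‖x - z i‖ ^ 2) =
      w i * ‖y - x‖ ^ 2 + 2 * ⟪y - x, w i • (x - z i)⟫ := by
    intro i
    rw [← sub_add_sub_cancel y x (z i), norm_add_sq_real, real_inner_smul_right]
    ring
  have hcentered : ∑ i, w i • (x - z i) = 0 := by
    simp only [smul_sub, Finset.sum_sub_distrib, ← Finset.sum_smul, hw, hx, one_smul, sub_self]
  rw [Finset.sum_congr rfl fun i _ => hterm i, Finset.sum_add_distrib, ← Finset.sum_mul,
    ← Finset.mul_sum, ← inner_sum, hcentered, hw, inner_zero_right]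
  ring

theorem eq_of_mem_convexHull_of_forall_norm_sub_le {s : Set E} {x y : E}
    (hx : x ∈ convexHull ℝ s) (hy : ∀ z ∈ s, ‖y - z‖ ≤ ‖x - z‖) : y = x := by
  obtain ⟨ι, _, w, z, hw0, hw1, hzs, hzx⟩ := mem_convexHull_iff_exists_fintype.1 hx
  have hnonpos : ∑ i, w i * (‖y - z i‖ ^ 2 - ‖x - z i‖ ^ 2) ≤ 0 :=
    Finset.sum_nonpos fun i _ => mul_nonpos_of_nonneg_of_nonpos (hw0 i)
      (sub_nonpos.2 (pow_le_pow_left₀ (norm_nonneg _) (hy _ (hzs i)) 2))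
  rw [sum_mul_norm_sub_sq_sub_norm_sub_sq hw1 hzx] at hnonpos
  exact sub_eq_zero.1 (norm_eq_zero.1 (pow_eq_zero_iff two_ne_zero |>.1
    (le_antisymm hnonpos (sq_nonneg _))))

theorem stmt_6_general {n m : ℕ} (hm : 0 < m) (v : Fin m → EuclideanSpace ℝ (Fin n)) :
    {x : EuclideanSpace ℝ (Fin n) | ParetoMin (fun i x => ‖x - v i‖ ^ 2) x} =
      convexHull ℝ (Set.range v) := by
  ext x
  constructor
  · intro hpareto
    by_contra hx
    have hne : (convexHull ℝ (Set.range v)).Nonempty :=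
      ⟨v ⟨0, hm⟩, subset_convexHull ℝ _ ⟨_, rfl⟩⟩
    obtain ⟨p, -, hp⟩ := exists_forall_norm_sub_lt_of_notMem (convex_convexHull ℝ _)
      ((Set.finite_range v).isClosed_convexHull (𝕜 := ℝ)).isComplete hne hx
    have hlt : ∀ i, ‖p - v i‖ ^ 2 < ‖x - v i‖ ^ 2 := fun i =>
      pow_lt_pow_left₀ (hp _ (subset_convexHull ℝ _ ⟨i, rfl⟩)) (norm_nonneg _) two_ne_zero
    exact hpareto ⟨p, fun i => (hlt i).le, ⟨0, hm⟩, hlt _⟩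
  · rintro hx ⟨y, hle, j, hlt⟩
    obtain rfl : y = x := eq_of_mem_convexHull_of_forall_norm_sub_le hx <| by
      rintro _ ⟨i, rfl⟩
      exact le_of_pow_le_pow_left₀ two_ne_zero (norm_nonneg _) (hle i)
    exact lt_irrefl _ hlt

theorem stmt_6 {n m : ℕ} (hm : 0 < m) (v : Fin m → EuclideanSpace ℝ (Fin n))
    (hv : Function.Injective v) :
    {x : EuclideanSpace ℝ (Fin n) | ParetoMin (fun i x => ‖x - v i‖ ^ 2) x} =
      convexHull ℝ (Set.range v) :=
  stmt_6_general hm v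
end

section
/- For f_i(x) = ‖x − v_i‖², i = 1,…,m, every point x in the convex hull of a subset S ⊆ {v_1,…,v_m} of size k is a Pareto optimum of the subproblem defined by the functions {f_i : v_i ∈ S}; i.e., the (k−1)-dimensional facets of the simplex are the Pareto sets of the k-objective subproblems. -/
open RealInnerProductSpace


/-- Pareto optimality (minimization) for a family of objectives indexed by a set `S`. -/
def ParetoMinOn {m : ℕ} {E : Type*} (S : Finset (Fin m)) (f : Fin m → E → ℝ) (x : E) : Prop :=
  ¬∃ y : E, (∀ i ∈ S, f i y ≤ f i x) ∧ ∃ j ∈ S, f j y < f j x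

theorem stmt_7 {n m : ℕ} (v : Fin m → EuclideanSpace ℝ (Fin n))
    (S : Finset (Fin m)) (x : EuclideanSpace ℝ (Fin n))
    (hx : x ∈ convexHull ℝ (v '' (S : Set (Fin m)))) :
    ParetoMinOn S (fun i x => ‖x - v i‖ ^ 2) x := by
  rintro ⟨y, hle, j, hj, hlt⟩
  -- the halfspace ⟪x - y, z⟫ ≤ (‖x‖² - ‖y‖²)/2 contains all v i, i ∈ S
  set c : ℝ := (‖x‖ ^ 2 - ‖y‖ ^ 2) / 2 with hc
  have hhalf : Convex ℝ {z : EuclideanSpace ℝ (Fin n) | ⟪x - y, z⟫ ≤ c} := by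
    exact convex_halfSpace_le ⟨fun a b => inner_add_right _ _ _,
      fun r a => real_inner_smul_right _ _ r⟩ c
  have hsub : v '' (S : Set (Fin m)) ⊆ {z | ⟪x - y, z⟫ ≤ c} := by
    rintro _ ⟨i, hi, rfl⟩
    have h := hle i hi
    simp only [Set.mem_setOf_eq]
    have e1 : ‖y - v i‖ ^ 2 = ‖y‖ ^ 2 - 2 * ⟪y, v i⟫ + ‖v i‖ ^ 2 := norm_sub_sq_real y (v i)
    have e2 : ‖x - v i‖ ^ 2 = ‖x‖ ^ 2 - 2 * ⟪x, v i⟫ + ‖v i‖ ^ 2 := norm_sub_sq_real x (v i)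
    rw [inner_sub_left]
    simp only [e1, e2] at h
    linarith
  have hxh : ⟪x - y, x⟫ ≤ c := convexHull_min hsub hhalf hx
  rw [inner_sub_left, real_inner_self_eq_norm_sq] at hxh
  have hxy : ‖x - y‖ ^ 2 ≤ 0 := by
    have e : ‖x - y‖ ^ 2 = ‖x‖ ^ 2 - 2 * ⟪x, y⟫ + ‖y‖ ^ 2 := norm_sub_sq_real x y
    rw [real_inner_comm] at e
    linarith
  have : x = y := by
    have := sq_nonneg ‖x - y‖
    have h0 : ‖x - y‖ ^ 2 = 0 := le_antisymm hxy this
    have := pow_eq_zero_iff (n := 2) (by norm_num) |>.mp h0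
    rwa [norm_sub_eq_zero_iff] at this
  rw [this] at hlt
  exact lt_irrefl _ hlt
end

section
/- The jet z(x,y) = (−x², y) ∈ J²(2,2) has the following properties: (a) f_0(x,y) = (−x² − y⁴, y) and f_1(x,y) = (−x² + y⁴, y) are both realizations of z (they have the same 2-jet at the origin); (b) the origin is a strict local Pareto optimum (for maximization) of f_0; (c) the origin is not a local Pareto optimum of f_1. -/
noncomputable def f₀ : ℝ × ℝ → ℝ × ℝ := fun p => (-p.1 ^ 2 - p.2 ^ 4, p.2)

noncomputable def f₁ : ℝ × ℝ → ℝ × ℝ := fun p => (-p.1 ^ 2 + p.2 ^ 4, p.2)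

/-! The maps differ from `z` only by `∓y⁴`, a term whose derivatives of order `< 4` vanish at the
origin. The first component `-x² - y⁴` of `f₀` is strictly maximal at the origin, while along the
positive `y`-axis both components of `f₁` increase. -/

open Filter Topology

section

variable {𝕜 E F G H : Type*} [NontriviallyNormedField 𝕜]
  [NormedAddCommGroup E] [NormedSpace 𝕜 E] [NormedAddCommGroup F] [NormedSpace 𝕜 F]
  [NormedAddCommGroup G] [NormedSpace 𝕜 G] [NormedAddCommGroup H] [NormedSpace 𝕜 H]

theorem iteratedFDeriv_pow_zero_of_lt {i n : ℕ} (hi : i < n) :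
    iteratedFDeriv 𝕜 i (fun t : 𝕜 => t ^ n) 0 = 0 := by
  rw [iteratedFDeriv_eq_equiv_comp, Function.comp_apply, iteratedDeriv_pow,
    zero_pow (Nat.sub_ne_zero_of_lt hi), mul_zero, map_zero]

theorem iteratedFDeriv_clm_comp_comp_clm_eq_zero {i : ℕ} {f : F → G} (L : G →L[𝕜] H)
    (M : E →L[𝕜] F) (hf : ContDiff 𝕜 i f) {x : E} (h : iteratedFDeriv 𝕜 i f (M x) = 0) :
    iteratedFDeriv 𝕜 i (L ∘ f ∘ M) x = 0 := by
  rw [L.iteratedFDeriv_comp_left (hf.comp M.contDiff).contDiffAt le_rfl,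
    M.iteratedFDeriv_comp_right hf x le_rfl, h]
  ext
  simp

theorem iteratedFDeriv_add_eq_of_eq_zero {i : ℕ} {f g : E → F} (hf : ContDiff 𝕜 i f)
    (hg : ContDiff 𝕜 i g) {x : E} (h : iteratedFDeriv 𝕜 i g x = 0) :
    iteratedFDeriv 𝕜 i (f + g) x = iteratedFDeriv 𝕜 i f x := by
  rw [iteratedFDeriv_add_apply hf.contDiffAt hg.contDiffAt, h, add_zero]

end

theorem iteratedFDeriv_add_quartic_zero (c : ℝ) {i : ℕ} (hi : i < 4) :
    iteratedFDeriv ℝ i (fun p : ℝ × ℝ => (-p.1 ^ 2 + c * p.2 ^ 4, p.2)) 0 =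
      iteratedFDeriv ℝ i (fun p : ℝ × ℝ => (-p.1 ^ 2, p.2)) 0 := by
  have hsplit : (fun p : ℝ × ℝ => (-p.1 ^ 2 + c * p.2 ^ 4, p.2)) =
      (fun p : ℝ × ℝ => (-p.1 ^ 2, p.2)) +
        (c • ContinuousLinearMap.inl ℝ ℝ ℝ) ∘ (fun t : ℝ => t ^ 4) ∘
          ContinuousLinearMap.snd ℝ ℝ ℝ := by
    ext p <;> simp
  rw [hsplit]
  refine iteratedFDeriv_add_eq_of_eq_zero (by fun_prop) (by fun_prop) ?_
  exact iteratedFDeriv_clm_comp_comp_clm_eq_zero _ _ (by fun_prop)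
    (by simpa using iteratedFDeriv_pow_zero_of_lt hi)

theorem f₀_eq : f₀ = fun p : ℝ × ℝ => (-p.1 ^ 2 + (-1) * p.2 ^ 4, p.2) := by
  ext p <;> simp [f₀]; ring

theorem f₁_eq : f₁ = fun p : ℝ × ℝ => (-p.1 ^ 2 + 1 * p.2 ^ 4, p.2) := by
  ext p <;> simp [f₁]

theorem eq_zero_of_f₀_fst_le {q : ℝ × ℝ} (h : (f₀ 0).1 ≤ (f₀ q).1) : q = 0 := by
  simp only [f₀, Prod.fst_zero, Prod.snd_zero] at h
  have hx : q.1 ^ 2 = 0 := by nlinarith [sq_nonneg q.1, sq_nonneg (q.2 ^ 2)]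
  have hy : q.2 ^ 4 = 0 := by nlinarith [sq_nonneg q.1, sq_nonneg (q.2 ^ 2)]
  exact Prod.ext (pow_eq_zero_iff two_ne_zero |>.mp hx) (pow_eq_zero_iff four_ne_zero |>.mp hy)

theorem f₁_zero_lt_f₁_mk_zero {t : ℝ} (ht : 0 < t) :
    (f₁ 0).1 < (f₁ (0, t)).1 ∧ (f₁ 0).2 < (f₁ (0, t)).2 := by
  simp only [f₁]
  constructor <;> norm_num <;> positivity

theorem exists_pos_mk_zero_mem_of_mem_nhds {U : Set (ℝ × ℝ)} (hU : U ∈ 𝓝 0) :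
    ∃ t : ℝ, 0 < t ∧ ((0 : ℝ), t) ∈ U := by
  have hlim : Tendsto (fun t : ℝ => ((0 : ℝ), t)) (𝓝[>] 0) (𝓝 0) :=
    ((continuous_const.prodMk continuous_id).tendsto' 0 0 rfl).mono_left nhdsWithin_le_nhds
  exact ((hlim.eventually hU).and self_mem_nhdsWithin).exists.imp fun _ h => ⟨h.2, h.1⟩

theorem stmt_15 :
    -- (a) f₀ and f₁ are realizations of the same 2-jet z(x,y) = (−x², y) at 0
    (∀ i ≤ 2, iteratedFDeriv ℝ i f₀ 0 = iteratedFDeriv ℝ i f₁ 0) ∧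
    (∀ i ≤ 2, iteratedFDeriv ℝ i f₀ 0 =
      iteratedFDeriv ℝ i (fun p : ℝ × ℝ => (-p.1 ^ 2, p.2)) 0) ∧
    -- (b) the origin is a strict local Pareto optimum (maximization) of f₀
    (∃ U ∈ nhds (0 : ℝ × ℝ), ∀ q ∈ U, q ≠ 0 →
      ¬((f₀ 0).1 ≤ (f₀ q).1 ∧ (f₀ 0).2 ≤ (f₀ q).2)) ∧
    -- (c) the origin is not a local Pareto optimum of f₁
    (∀ U ∈ nhds (0 : ℝ × ℝ), ∃ q ∈ U,
      ((f₁ 0).1 ≤ (f₁ q).1 ∧ (f₁ 0).2 ≤ (f₁ q).2) ∧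
      ((f₁ 0).1 < (f₁ q).1 ∨ (f₁ 0).2 < (f₁ q).2)) := by
  have jet₀ : ∀ i ≤ 2, iteratedFDeriv ℝ i f₀ 0 =
      iteratedFDeriv ℝ i (fun p : ℝ × ℝ => (-p.1 ^ 2, p.2)) 0 := fun i hi => by
    rw [f₀_eq, iteratedFDeriv_add_quartic_zero _ (by omega)]
  have jet₁ : ∀ i ≤ 2, iteratedFDeriv ℝ i f₁ 0 =
      iteratedFDeriv ℝ i (fun p : ℝ × ℝ => (-p.1 ^ 2, p.2)) 0 := fun i hi => by
    rw [f₁_eq, iteratedFDeriv_add_quartic_zero _ (by omega)]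
  refine ⟨fun i hi => (jet₀ i hi).trans (jet₁ i hi).symm, jet₀,
    ⟨Set.univ, univ_mem, fun q _ hq h => hq (eq_zero_of_f₀_fst_le h.1)⟩, fun U hU => ?_⟩
  obtain ⟨t, ht, htU⟩ := exists_pos_mk_zero_mem_of_mem_nhds hU
  have hlt := f₁_zero_lt_f₁_mk_zero ht
  exact ⟨(0, t), htU, ⟨hlt.1.le, hlt.2.le⟩, Or.inl hlt.1⟩
end
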